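/- Let R be a symmetric positive definite n×n real matrix, X a real n×q matrix such that XᵀR⁻¹X is positive definite, r ∈ ℝⁿ, f ∈ ℝ^q, and r₀₀ ∈ ℝ such that the (n+1)×(n+1) block matrix with top-left entry r₀₀, top-right block rᵀ, bottom-left block r, and bottom-right block R is positive semidefinite. Then c* := r₀₀ − rᵀR⁻¹r + (f − XᵀR⁻¹r)ᵀ(XᵀR⁻¹X)⁻¹(f − XᵀR⁻¹r) satisfies c* ≥ r₀₀ − rᵀR⁻¹r ≥ 0; in particular the universal (co)kriging variance factor c* is nonnegative and dominates the simple kriging variance factor r₀₀ − rᵀR⁻¹r (variance inequality of Corollary 3.4). -/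

import Mathlib

open Matrix

theorem Matrix.PosDef.dotProduct_inv_mulVec_le_of_posSemidef_fromBlocks {n : Type*} [Fintype n]
    [DecidableEq n] {R : Matrix n n ℝ} (hR : R.PosDef) {r : n → ℝ} {a : ℝ}
    (h : (fromBlocks (of fun _ _ : Unit => a) (replicateRow Unit r) (replicateCol Unit r)
      R).PosSemidef) :
    r ⬝ᵥ (R⁻¹ *ᵥ r) ≤ a := by
  have : Invertible R := hR.isUnit.invertible
  have hschur := (PosDef.fromBlocks₂₂ _ _ hR).mp
    (by rwa [conjTranspose_replicateRow, star_trivial])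
  -- the single entry of the 1×1 Schur complement is `a - r ⬝ᵥ (R⁻¹ *ᵥ r)`
  have := hschur.diag_nonneg (i := ())
  rwa [← replicateRow_vecMul, conjTranspose_replicateRow, star_trivial,
    replicateRow_mul_replicateCol, sub_apply, of_apply, of_apply, ← dotProduct_mulVec,
    sub_nonneg] at this

/-- The universal (co)kriging variance factor
`c* = r₀₀ − rᵀR⁻¹r + (f − XᵀR⁻¹r)ᵀ(XᵀR⁻¹X)⁻¹(f − XᵀR⁻¹r)` satisfies
`c* ≥ r₀₀ − rᵀR⁻¹r ≥ 0`, provided the extended correlation matrix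
`[[r₀₀, rᵀ], [r, R]]` is positive semidefinite. -/
theorem cokriging_variance_inequality {n q : ℕ}
    (R : Matrix (Fin n) (Fin n) ℝ) (X : Matrix (Fin n) (Fin q) ℝ)
    (r : Fin n → ℝ) (f : Fin q → ℝ) (r00 : ℝ)
    (hR : R.PosDef) (hM : (Xᵀ * R⁻¹ * X).PosDef)
    (hblock : (Matrix.fromBlocks
        (Matrix.of fun (_ : Unit) (_ : Unit) => r00)
        (Matrix.of fun (_ : Unit) j => r j)
        (Matrix.of fun i (_ : Unit) => r i) R).PosSemidef) :
    r00 - r ⬝ᵥ (R⁻¹ *ᵥ r) ≤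
      r00 - r ⬝ᵥ (R⁻¹ *ᵥ r) +
        (f - Xᵀ *ᵥ (R⁻¹ *ᵥ r)) ⬝ᵥ ((Xᵀ * R⁻¹ * X)⁻¹ *ᵥ (f - Xᵀ *ᵥ (R⁻¹ *ᵥ r))) ∧
    0 ≤ r00 - r ⬝ᵥ (R⁻¹ *ᵥ r) :=
  ⟨le_add_of_nonneg_right (hM.inv.posSemidef.dotProduct_mulVec_nonneg _),
    sub_nonneg.mpr (hR.dotProduct_inv_mulVec_le_of_posSemidef_fromBlocks hblock)⟩
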